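/- arXiv:1811.11036 — 5 statements merged into one kernel-verified Lean document; each statement's English description precedes it below -/
import Mathlib

section
/- For every (x₁,x₂) ∈ ℝ² ∖ ℤ², λ(x₁, x₂ + 1) = λ(x₁, x₂), i.e. the function λ is periodic with period 1 in the second variable. -/
open Real

/-- The Green function `λ` of the Laplacian on the flat unit torus `ℝ²/ℤ²`, viewed as a
function on `ℝ²` (well defined away from the lattice `ℤ²`). -/
noncomputable def lam (x : ℝ × ℝ) : ℝ :=
  4 * π * (x.2 ^ 2 - x.2 + 1 / 6)
    - 2 * Real.log (1 + Real.exp (-4 * π * x.2) -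
        2 * Real.exp (-2 * π * x.2) * Real.cos (2 * π * x.1))
    - 2 * ∑' n : ℕ, Real.log (1 + Real.exp (-4 * π * (n + 1) - 4 * π * x.2) -
        2 * Real.exp (-2 * π * (n + 1) - 2 * π * x.2) * Real.cos (2 * π * x.1))
    - 2 * ∑' n : ℕ, Real.log (1 + Real.exp (-4 * π * (n + 1) + 4 * π * x.2) -
        2 * Real.exp (-2 * π * (n + 1) + 2 * π * x.2) * Real.cos (2 * π * x.1))

/-!
With `q = e^{2πi(x₁ + i x₂)}`, the summands of `λ` are `log |1 - q e^{-2πn}|²` (`n ≥ 0`) and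
`log |1 - q⁻¹ e^{-2πn}|²` (`n ≥ 1`). Replacing `x₂` by `x₂ + 1` multiplies `q` by `e^{-2π}`, so
each series shifts by one index: the first loses `log |1 - q|²` and the second gains
`log |1 - q⁻¹|² = log |1 - q|² + 4π x₂`. The net change `-8π x₂` cancels the change of the
quadratic term `4π (x₂² - x₂ + 1/6)`.
-/

/-- `greenTerm c t = log |1 - e^{2πi(c + i t)}|²`. -/
noncomputable def greenTerm (c t : ℝ) : ℝ :=
  log (1 + exp (-4 * π * t) - 2 * exp (-2 * π * t) * cos (2 * π * c))

noncomputable def greenTail (c t : ℝ) : ℝ :=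
  ∑' n : ℕ, greenTerm c (n + 1 + t)

lemma lam_eq_greenTail (x : ℝ × ℝ) :
    lam x = 4 * π * (x.2 ^ 2 - x.2 + 1 / 6) - 2 * greenTerm x.1 x.2
      - 2 * greenTail x.1 x.2 - 2 * greenTail x.1 (-x.2) := by
  simp only [lam, greenTail, greenTerm]
  ring_nf

lemma summable_exp_mul_nat_add {k : ℝ} (hk : k < 0) (a : ℝ) :
    Summable fun n : ℕ => exp (k * (n + a)) := by
  simpa only [add_mul, exp_add, mul_comm k] using
    (summable_exp_nat_mul_iff.mpr hk).mul_right (exp (k * a))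

lemma summable_greenTerm_nat_add (c a : ℝ) :
    Summable fun n : ℕ => greenTerm c (n + a) := by
  have h₄ := summable_exp_mul_nat_add (by linarith [pi_pos] : -4 * π < 0) a
  have h₂ := summable_exp_mul_nat_add (by linarith [pi_pos] : -2 * π < 0) a
  refine (Real.summable_log_one_add_of_summable
    (h₄.sub ((h₂.mul_left 2).mul_right (cos (2 * π * c))))).congr fun n => ?_
  rw [greenTerm, add_sub_assoc]

lemma greenTail_eq_add (c t : ℝ) :
    greenTail c t = greenTerm c (t + 1) + greenTail c (t + 1) := by
  have h := (summable_greenTerm_nat_add c (1 + t)).tsum_eq_zero_add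
  simp only [Nat.cast_zero, zero_add, Nat.cast_succ] at h
  simp only [greenTail, add_assoc] at h ⊢
  rw [h, add_comm t 1]

lemma greenTerm_arg_pos (c : ℝ) {t : ℝ} (ht : t ≠ 0) :
    0 < 1 + exp (-4 * π * t) - 2 * exp (-2 * π * t) * cos (2 * π * c) := by
  have he1 : exp (-2 * π * t) ≠ 1 := by
    rw [Ne, exp_eq_one_iff]
    exact mul_ne_zero (by linarith [pi_pos]) ht
  have hsq : exp (-4 * π * t) = exp (-2 * π * t) ^ 2 := by
    rw [← exp_nat_mul]; ring_nf
  -- the argument is `(1 - e)² + 2e(1 - cos (2πc))` with `e = e^{-2πt} ≠ 1`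
  have : 0 < (1 - exp (-2 * π * t)) ^ 2 := by positivity [sub_ne_zero.mpr he1.symm]
  nlinarith [cos_le_one (2 * π * c), exp_pos (-2 * π * t)]

lemma greenTerm_neg (c t : ℝ) : greenTerm c (-t) = 4 * π * t + greenTerm c t := by
  rcases eq_or_ne t 0 with rfl | ht
  · simp
  have hscale : 1 + exp (-4 * π * -t) - 2 * exp (-2 * π * -t) * cos (2 * π * c)
      = exp (4 * π * t) * (1 + exp (-4 * π * t) - 2 * exp (-2 * π * t) * cos (2 * π * c)) := by
    have h₄ : exp (4 * π * t) * exp (-4 * π * t) = 1 := by rw [← exp_add]; simp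
    have h₂ : exp (4 * π * t) * exp (-2 * π * t) = exp (-2 * π * -t) := by
      rw [← exp_add]; ring_nf
    rw [show -4 * π * -t = 4 * π * t by ring, ← h₂]
    linear_combination -h₄
  rw [greenTerm, greenTerm, hscale, log_mul (exp_ne_zero _) (greenTerm_arg_pos c ht).ne', log_exp]

theorem lam_periodic_snd_general (x₁ x₂ : ℝ) :
    lam (x₁, x₂ + 1) = lam (x₁, x₂) := by
  have h₁ := greenTail_eq_add x₁ x₂
  have h₂ := greenTail_eq_add x₁ (-(x₂ + 1))
  rw [show -(x₂ + 1) + 1 = -x₂ by ring, greenTerm_neg] at h₂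
  rw [lam_eq_greenTail, lam_eq_greenTail, h₁, h₂]
  ring

/-- `λ` is periodic with period 1 in the second variable. -/
theorem lam_periodic_snd (x₁ x₂ : ℝ) (h : ¬ ∃ m k : ℤ, x₁ = (m : ℝ) ∧ x₂ = (k : ℝ)) :
    lam (x₁, x₂ + 1) = lam (x₁, x₂) :=
  lam_periodic_snd_general x₁ x₂
end

section
/- The function λ is infinitely differentiable on ℝ² ∖ ℤ² and its Euclidean Laplacian is constant there: ∂²λ/∂x₁² + ∂²λ/∂x₂² = 8π at every point of ℝ² ∖ ℤ². (With the paper's sign convention Δ = −div∇ this reads Δλ = −8π away from the lattice, consistent with Δ_g G = 8πδ_P − 8π on the unit-volume flat torus.) -/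
open Real Filter

noncomputable def ec (z : ℂ) : ℂ := Complex.exp (2 * (π : ℂ) * Complex.I * z)

lemma ec_diff : Differentiable ℂ ec := by
  unfold ec
  exact Complex.differentiable_exp.comp ((differentiable_const _).mul differentiable_id)

lemma ec_abs (z : ℂ) : ‖ec z‖ = Real.exp (-(2*π*z.im)) := by
  rw [ec, Complex.norm_exp]
  congr 1
  simp [Complex.mul_re, Complex.mul_im]

noncomputable def kap (n : ℕ) : ℝ := Real.exp (-(2*π*((n:ℝ)+1)))

lemma kap_pos (n : ℕ) : 0 < kap n := Real.exp_pos _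

noncomputable def Bnd (n : ℕ) : ℝ := Real.exp (-(2*π)) * Real.exp (-(2*π*(n:ℝ)))

lemma Bnd_summable : Summable Bnd := by
  have h : ∀ n : ℕ, Bnd n = Real.exp (-(2*π)) * (Real.exp (-(2*π)))^n := by
    intro n
    rw [Bnd, ← Real.exp_nat_mul]
    ring_nf
  rw [funext h]
  exact (summable_geometric_of_lt_one (Real.exp_nonneg _)
    (Real.exp_lt_one_iff.mpr (by nlinarith [Real.pi_pos]))).mul_left _

lemma Bnd_le_half (n : ℕ) : Bnd n ≤ 1/2 := by
  have h1 : Real.exp (-(2*π)) ≤ Real.exp (-1) := by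
    apply Real.exp_le_exp.mpr
    nlinarith [Real.pi_gt_three]
  have h2 : Real.exp (-1) ≤ 1/2 := by
    have he : (2:ℝ) ≤ Real.exp 1 := by linarith [Real.exp_one_gt_d9]
    rw [Real.exp_neg]
    have := inv_anti₀ (by norm_num : (0:ℝ) < 2) he
    norm_num at this ⊢
    linarith
  have h3 : Real.exp (-(2*π*(n:ℝ))) ≤ 1 := Real.exp_le_one_iff.mpr
    (by nlinarith [Real.pi_pos, (Nat.cast_nonneg n : (0:ℝ) ≤ n)])
  have h4 := Real.exp_pos (-(2*π))
  have h5 := Real.exp_nonneg (-(2*π*(n:ℝ)))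
  rw [Bnd]
  nlinarith

lemma Bnd_nonneg (n : ℕ) : 0 ≤ Bnd n :=
  le_of_lt (mul_pos (Real.exp_pos _) (Real.exp_pos _))

lemma ec_abs_sq (t x y : ℝ) :
    ‖1 - (Real.exp t : ℂ) * ec (x + y * Complex.I)‖ ^ 2
      = 1 + Real.exp (2*t - 4*π*y) - 2 * Real.exp (t - 2*π*y) * Real.cos (2*π*x) := by
  have h : (Real.exp t : ℂ) * ec (x + y * Complex.I)
      = Complex.exp (((t - 2*π*y : ℝ) : ℂ) + ((2*π*x : ℝ) : ℂ) * Complex.I) := by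
    rw [ec, Complex.ofReal_exp, ← Complex.exp_add]
    congr 1
    push_cast
    ring_nf
    rw [Complex.I_sq]
    ring
  rw [h, ← Complex.normSq_eq_norm_sq, Complex.normSq_apply]
  have h2 : 2*t - 4*π*y = (t - 2*π*y) + (t - 2*π*y) := by ring
  rw [h2, Real.exp_add]
  simp [Complex.exp_re, Complex.exp_im, Complex.sub_re, Complex.sub_im, Complex.add_re,
    Complex.add_im, Complex.mul_re, Complex.mul_im]
  nlinarith [Real.sin_sq_add_cos_sq (2*π*x)]

lemma term_plus (k x y : ℝ) :
    1 + Real.exp (-4*π*(k+1) - 4*π*y) - 2*Real.exp (-2*π*(k+1) - 2*π*y) * Real.cos (2*π*x)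
      = ‖1 - (Real.exp (-(2*π*(k+1))) : ℂ) * ec ((x:ℂ) + (y:ℂ)*Complex.I)‖^2 := by
  rw [ec_abs_sq]
  ring_nf

lemma term_minus (k x y : ℝ) :
    1 + Real.exp (-4*π*(k+1) + 4*π*y) - 2*Real.exp (-2*π*(k+1) + 2*π*y) * Real.cos (2*π*x)
      = ‖1 - (Real.exp (-(2*π*(k+1))) : ℂ) * ec (-((x:ℂ) + (y:ℂ)*Complex.I))‖^2 := by
  have hneg : (((-x : ℝ)):ℂ) + ((-y : ℝ):ℂ)*Complex.I = -((x:ℂ) + (y:ℂ)*Complex.I) := by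
    push_cast; ring
  rw [← hneg, ec_abs_sq]
  rw [show 2*π*(-x) = -(2*π*x) by ring, Real.cos_neg]
  ring_nf

lemma term_main (x y : ℝ) :
    1 + Real.exp (-4*π*y) - 2*Real.exp (-2*π*y) * Real.cos (2*π*x)
      = ‖1 - ec ((x:ℂ) + (y:ℂ)*Complex.I)‖^2 := by
  have h := ec_abs_sq 0 x y
  simp only [Real.exp_zero, Complex.ofReal_one, one_mul] at h
  rw [h]
  ring_nf

lemma re_log_abs_sq (w : ℂ) : Real.log (‖w‖ ^ 2) = 2 * (Complex.log w).re := by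
  rw [Complex.log_re, Real.log_pow]
  push_cast
  ring

lemma re_log_mul_unit {c : ℂ} (hc : ‖c‖ = 1) (w : ℂ) :
    Real.log (‖w‖ ^ 2) = 2 * (Complex.log (c * w)).re := by
  rw [Complex.log_re, norm_mul, hc, one_mul, Real.log_pow]
  push_cast
  ring

noncomputable def unitize (w : ℂ) : ℂ := (‖w‖ : ℂ) / w

lemma unitize_abs {w : ℂ} (hw : w ≠ 0) : ‖unitize w‖ = 1 := by
  rw [unitize, norm_div, Complex.norm_of_nonneg (norm_nonneg w)]
  exact div_self (norm_ne_zero_iff.mpr hw)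

lemma unitize_mul_mem {w : ℂ} (hw : w ≠ 0) : unitize w * w ∈ Complex.slitPlane := by
  rw [unitize, div_mul_cancel₀ _ hw]
  rw [Complex.mem_slitPlane_iff]
  left
  simpa using norm_pos_iff.mpr hw

lemma mem_slitPlane_of_small {w : ℂ} (h : ‖w‖ ≤ 1/2) :
    1 - w ∈ Complex.slitPlane := by
  rw [Complex.mem_slitPlane_iff]
  left
  have := Complex.abs_re_le_norm w
  simp only [Complex.sub_re, Complex.one_re]
  have : |w.re| ≤ 1/2 := le_trans (Complex.abs_re_le_norm w) h
  have := abs_le.mp this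
  linarith

lemma norm_log_one_sub_le {w : ℂ} (h : ‖w‖ ≤ 1/2) :
    ‖Complex.log (1 - w)‖ ≤ 3/2 * ‖w‖ := by
  have h2 : ‖(-w : ℂ)‖ ≤ 1/2 := by rwa [norm_neg]
  have := Complex.norm_log_one_add_half_le_self h2
  rw [show (1 : ℂ) + -w = 1 - w by ring] at this
  simpa using this

lemma one_sub_small_ne {w : ℂ} (h : ‖w‖ ≤ 1/2) : (1:ℂ) - w ≠ 0 :=
  Complex.slitPlane_ne_zero (mem_slitPlane_of_small h)

lemma tail_term_bound {b : ℝ} {N : ℕ} (hN : |b| + 1 ≤ (N:ℝ)) (n : ℕ) {z : ℂ}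
    (him : |z.im| ≤ |b| + 1) :
    ‖(kap (n+N) : ℂ) * ec z‖ ≤ Bnd n := by
  rw [norm_mul, Complex.norm_real, Real.norm_eq_abs, ec_abs, abs_of_pos (kap_pos _), kap, Bnd,
    ← Real.exp_add, ← Real.exp_add]
  apply Real.exp_le_exp.mpr
  have h1 : -(|b|+1) ≤ z.im := (abs_le.mp him).1
  have h2 : ((n:ℝ) + (N:ℝ)) = ((n+N : ℕ) : ℝ) := by push_cast; ring
  have hπ := Real.pi_pos
  push_cast
  nlinarith

lemma exp_mul_ec_eq_one {s : ℝ} {z : ℂ} (h : (Real.exp s : ℂ) * ec z = 1) :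
    ∃ m : ℤ, z.re = m ∧ z.im = s / (2 * π) := by
  rw [ec, Complex.ofReal_exp, ← Complex.exp_add, Complex.exp_eq_one_iff] at h
  obtain ⟨m, hm⟩ := h
  rw [Complex.ext_iff] at hm
  obtain ⟨h1, h2⟩ := hm
  simp [Complex.add_re, Complex.add_im, Complex.mul_re, Complex.mul_im] at h1 h2
  have hπ := Real.pi_ne_zero
  refine ⟨m, ?_, ?_⟩
  · exact mul_left_cancel₀ (mul_ne_zero two_ne_zero hπ)
      (by linarith : 2 * π * z.re = 2 * π * (m:ℝ))
  · field_simp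
    linarith

lemma one_sub_exp_ec_ne {a b : ℝ} (hp : ¬∃ m k : ℤ, a = (m:ℝ) ∧ b = (k:ℝ)) (k : ℤ) :
    (1 : ℂ) - (Real.exp (2*π*k) : ℂ) * ec ((a:ℂ) + (b:ℂ) * Complex.I) ≠ 0 := by
  intro h
  have h1 : (Real.exp (2*π*k) : ℂ) * ec ((a:ℂ) + (b:ℂ) * Complex.I) = 1 := by
    linear_combination -h
  obtain ⟨m, hre, him⟩ := exp_mul_ec_eq_one h1
  simp at hre him
  refine hp ⟨m, k, hre, ?_⟩
  rw [him]

lemma local_rep {a b : ℝ} (hp : ¬∃ m k : ℤ, a = (m:ℝ) ∧ b = (k:ℝ)) :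
    ∃ (U : Set ℂ) (F : ℂ → ℂ), IsOpen U ∧ ((a:ℂ) + (b:ℂ)*Complex.I) ∈ U ∧
      DifferentiableOn ℂ F U ∧
      ∀ x : ℝ × ℝ, ((x.1:ℂ) + (x.2:ℂ)*Complex.I) ∈ U →
        lam x = 4*π*(x.2^2 - x.2 + 1/6) - 4*(F ((x.1:ℂ) + (x.2:ℂ)*Complex.I)).re := by
  have hpneg : ¬∃ m k : ℤ, -a = (m:ℝ) ∧ -b = (k:ℝ) := by
    rintro ⟨m, k, h1, h2⟩
    exact hp ⟨-m, -k, by push_cast; linarith, by push_cast; linarith⟩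
  set z₀ : ℂ := (a:ℂ) + (b:ℂ)*Complex.I with hz₀def
  have hz₀neg : ((-a : ℝ):ℂ) + ((-b:ℝ):ℂ)*Complex.I = -z₀ := by
    rw [hz₀def]; push_cast; ring
  have hne0 : (1:ℂ) - ec z₀ ≠ 0 := by
    have h := one_sub_exp_ec_ne hp 0
    simpa using h
  have hnep : ∀ n : ℕ, (1:ℂ) - (kap n : ℂ) * ec z₀ ≠ 0 := by
    intro n
    have h := one_sub_exp_ec_ne hp (-(n+1))
    rw [show (2*π*((-(n+1) : ℤ) : ℝ)) = -(2*π*((n:ℝ)+1)) by push_cast; ring] at h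
    exact h
  have hnem : ∀ n : ℕ, (1:ℂ) - (kap n : ℂ) * ec (-z₀) ≠ 0 := by
    intro n
    have h := one_sub_exp_ec_ne hpneg (-(n+1))
    rw [show (2*π*((-(n+1) : ℤ) : ℝ)) = -(2*π*((n:ℝ)+1)) by push_cast; ring] at h
    rw [hz₀neg] at h
    exact h
  set N : ℕ := ⌈|b|⌉₊ + 1 with hNdef
  have hN : |b| + 1 ≤ (N:ℝ) := by
    rw [hNdef]
    push_cast
    linarith [Nat.le_ceil |b|]
  set Ω : Set ℂ := {z : ℂ | |z.im - b| < 1} with hΩdef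
  have hΩo : IsOpen Ω :=
    isOpen_lt (continuous_abs.comp (Complex.continuous_im.sub continuous_const)) continuous_const
  have hΩim : ∀ z ∈ Ω, |z.im| ≤ |b| + 1 := by
    intro z hz
    have h1 : |z.im - b| < 1 := hz
    have h2 := abs_sub_abs_le_abs_sub z.im b
    linarith
  set c0 : ℂ := unitize (1 - ec z₀) with hc0
  set cp : ℕ → ℂ := fun n => unitize (1 - (kap n : ℂ) * ec z₀) with hcp
  set cm : ℕ → ℂ := fun n => unitize (1 - (kap n : ℂ) * ec (-z₀)) with hcm
  set U : Set ℂ := Ω ∩ ({z : ℂ | c0 * (1 - ec z) ∈ Complex.slitPlane} ∩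
      ⋂ n ∈ Finset.range N, ({z : ℂ | cp n * (1 - (kap n:ℂ) * ec z) ∈ Complex.slitPlane} ∩
        {z : ℂ | cm n * (1 - (kap n:ℂ) * ec (-z)) ∈ Complex.slitPlane})) with hUdef
  have hcont : Continuous ec := ec_diff.continuous
  have hcontm : Continuous (fun z : ℂ => ec (-z)) := hcont.comp continuous_neg
  have hUo : IsOpen U := by
    apply hΩo.inter
    apply IsOpen.inter
    · exact IsOpen.preimage (continuous_const.mul (continuous_const.sub hcont))
        Complex.isOpen_slitPlane
    · apply isOpen_biInter_finset
      intro n _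
      exact (IsOpen.preimage (continuous_const.mul
          (continuous_const.sub (continuous_const.mul hcont))) Complex.isOpen_slitPlane).inter
        (IsOpen.preimage (continuous_const.mul
          (continuous_const.sub (continuous_const.mul hcontm))) Complex.isOpen_slitPlane)
  have hz₀U : z₀ ∈ U := by
    refine ⟨?_, unitize_mul_mem hne0, ?_⟩
    · show |z₀.im - b| < 1
      rw [hz₀def]
      simp
    · apply Set.mem_iInter₂.mpr
      intro n _
      exact ⟨unitize_mul_mem (hnep n), unitize_mul_mem (hnem n)⟩
  have htp : ∀ (n : ℕ) (z : ℂ), z ∈ Ω → ‖(kap (n+N) : ℂ) * ec z‖ ≤ Bnd n :=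
    fun n z hz => tail_term_bound hN n (hΩim z hz)
  have htm : ∀ (n : ℕ) (z : ℂ), z ∈ Ω → ‖(kap (n+N) : ℂ) * ec (-z)‖ ≤ Bnd n := by
    intro n z hz
    apply tail_term_bound hN n
    rw [Complex.neg_im, abs_neg]
    exact hΩim z hz
  have hlp : ∀ (n : ℕ) (z : ℂ), z ∈ Ω →
      ‖Complex.log (1 - (kap (n+N):ℂ) * ec z)‖ ≤ 3/2 * Bnd n := by
    intro n z hz
    refine le_trans (norm_log_one_sub_le (le_trans (htp n z hz) (Bnd_le_half n))) ?_
    have := htp n z hz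
    linarith
  have hlm : ∀ (n : ℕ) (z : ℂ), z ∈ Ω →
      ‖Complex.log (1 - (kap (n+N):ℂ) * ec (-z))‖ ≤ 3/2 * Bnd n := by
    intro n z hz
    refine le_trans (norm_log_one_sub_le (le_trans (htm n z hz) (Bnd_le_half n))) ?_
    have := htm n z hz
    linarith
  set Ftail : ℂ → ℂ := fun z => ∑' n : ℕ,
    (Complex.log (1 - (kap (n+N):ℂ) * ec z) + Complex.log (1 - (kap (n+N):ℂ) * ec (-z)))
    with hFt
  have hFtd : DifferentiableOn ℂ Ftail Ω := by
    apply Complex.differentiableOn_tsum_of_summable_norm (Bnd_summable.mul_left 3) ?_ hΩo ?_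
    · intro i
      intro z hz
      apply DifferentiableAt.differentiableWithinAt
      apply DifferentiableAt.add
      · apply DifferentiableAt.clog
        · exact (differentiableAt_const _).sub ((differentiableAt_const _).mul (ec_diff z))
        · exact mem_slitPlane_of_small (le_trans (htp i z hz) (Bnd_le_half i))
      · apply DifferentiableAt.clog
        · exact (differentiableAt_const _).sub
            ((differentiableAt_const _).mul ((ec_diff.comp differentiable_neg) z))
        · exact mem_slitPlane_of_small (le_trans (htm i z hz) (Bnd_le_half i))
    · intro i z hz
      refine le_trans (norm_add_le _ _) ?_
      have h1 := hlp i z hz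
      have h2 := hlm i z hz
      linarith
  set F : ℂ → ℂ := fun z => Complex.log (c0 * (1 - ec z))
    + ∑ n ∈ Finset.range N, (Complex.log (cp n * (1 - (kap n:ℂ) * ec z))
        + Complex.log (cm n * (1 - (kap n:ℂ) * ec (-z))))
    + Ftail z with hFdef
  have hFd : DifferentiableOn ℂ F U := by
    apply DifferentiableOn.add
    apply DifferentiableOn.add
    · intro z hz
      apply DifferentiableAt.differentiableWithinAt
      apply DifferentiableAt.clog
      · exact (differentiableAt_const _).mul ((differentiableAt_const _).sub (ec_diff z))
      · exact hz.2.1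
    · apply DifferentiableOn.fun_sum
      intro n hn
      intro z hz
      have hmem := (Set.mem_iInter₂.mp hz.2.2) n hn
      apply DifferentiableAt.differentiableWithinAt
      apply DifferentiableAt.add
      · apply DifferentiableAt.clog
        · exact (differentiableAt_const _).mul ((differentiableAt_const _).sub
            ((differentiableAt_const _).mul (ec_diff z)))
        · exact hmem.1
      · apply DifferentiableAt.clog
        · exact (differentiableAt_const _).mul ((differentiableAt_const _).sub
            ((differentiableAt_const _).mul ((ec_diff.comp differentiable_neg) z)))
        · exact hmem.2
    · exact hFtd.mono Set.inter_subset_left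
  refine ⟨U, F, hUo, hz₀U, hFd, ?_⟩
  intro x hx
  simp only [lam]
  set z : ℂ := (x.1:ℂ) + (x.2:ℂ)*Complex.I with hzdef
  have hzΩ : z ∈ Ω := hx.1
  have habs0 : ‖c0‖ = 1 := unitize_abs hne0
  have habsp : ∀ n, ‖cp n‖ = 1 := fun n => unitize_abs (hnep n)
  have habsm : ∀ n, ‖cm n‖ = 1 := fun n => unitize_abs (hnem n)
  set Sp : ℕ → ℝ := fun n : ℕ => Real.log (1 + Real.exp (-4 * π * (n + 1) - 4 * π * x.2) -
        2 * Real.exp (-2 * π * (n + 1) - 2 * π * x.2) * Real.cos (2 * π * x.1)) with hSpdef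
  set Sm : ℕ → ℝ := fun n : ℕ => Real.log (1 + Real.exp (-4 * π * (n + 1) + 4 * π * x.2) -
        2 * Real.exp (-2 * π * (n + 1) + 2 * π * x.2) * Real.cos (2 * π * x.1)) with hSmdef
  have hSp_eq : ∀ n : ℕ, Sp n = 2 * (Complex.log (1 - (kap n:ℂ) * ec z)).re := by
    intro n
    simp only [hSpdef]
    rw [term_plus (n:ℝ) x.1 x.2, re_log_abs_sq]
    rfl
  have hSm_eq : ∀ n : ℕ, Sm n = 2 * (Complex.log (1 - (kap n:ℂ) * ec (-z))).re := by
    intro n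
    simp only [hSmdef]
    rw [term_minus (n:ℝ) x.1 x.2, re_log_abs_sq]
    rfl
  have hSp_eq' : ∀ n : ℕ, Sp n = 2 * (Complex.log (cp n * (1 - (kap n:ℂ) * ec z))).re := by
    intro n
    simp only [hSpdef]
    rw [term_plus (n:ℝ) x.1 x.2, re_log_mul_unit (habsp n)]
    rfl
  have hSm_eq' : ∀ n : ℕ, Sm n = 2 * (Complex.log (cm n * (1 - (kap n:ℂ) * ec (-z)))).re := by
    intro n
    simp only [hSmdef]
    rw [term_minus (n:ℝ) x.1 x.2, re_log_mul_unit (habsm n)]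
    rfl
  have hmain : Real.log (1 + Real.exp (-4*π*x.2) - 2*Real.exp (-2*π*x.2)*Real.cos (2*π*x.1))
      = 2 * (Complex.log (c0 * (1 - ec z))).re := by
    rw [term_main x.1 x.2, re_log_mul_unit habs0]
  have hsump_c : Summable (fun n => Complex.log (1 - (kap (n+N):ℂ) * ec z)) :=
    Summable.of_norm_bounded (Bnd_summable.mul_left (3/2)) (fun n => hlp n z hzΩ)
  have hsumm_c : Summable (fun n => Complex.log (1 - (kap (n+N):ℂ) * ec (-z))) :=
    Summable.of_norm_bounded (Bnd_summable.mul_left (3/2)) (fun n => hlm n z hzΩ)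
  have hsump : Summable Sp := by
    rw [← summable_nat_add_iff N]
    apply Summable.of_norm_bounded (Bnd_summable.mul_left 3)
    intro n
    rw [hSp_eq (n+N)]
    have h := hlp n z hzΩ
    have habs := Complex.abs_re_le_norm (Complex.log (1 - (kap (n+N):ℂ) * ec z))
    rw [Real.norm_eq_abs, abs_mul]
    have : |(Complex.log (1 - (kap (n+N):ℂ) * ec z)).re| ≤ 3/2 * Bnd n := le_trans habs h
    rw [abs_two]
    linarith
  have hsumm : Summable Sm := by
    rw [← summable_nat_add_iff N]
    apply Summable.of_norm_bounded (Bnd_summable.mul_left 3)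
    intro n
    rw [hSm_eq (n+N)]
    have h := hlm n z hzΩ
    have habs := Complex.abs_re_le_norm (Complex.log (1 - (kap (n+N):ℂ) * ec (-z)))
    rw [Real.norm_eq_abs, abs_mul]
    have : |(Complex.log (1 - (kap (n+N):ℂ) * ec (-z))).re| ≤ 3/2 * Bnd n := le_trans habs h
    rw [abs_two]
    linarith
  have hsplit_p : ∑' n, Sp n = (∑ n ∈ Finset.range N, Sp n) + ∑' n, Sp (n+N) :=
    (Summable.sum_add_tsum_nat_add N hsump).symm
  have hsplit_m : ∑' n, Sm n = (∑ n ∈ Finset.range N, Sm n) + ∑' n, Sm (n+N) :=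
    (Summable.sum_add_tsum_nat_add N hsumm).symm
  have htail_p : ∑' n, Sp (n+N)
      = 2 * (∑' n, Complex.log (1 - (kap (n+N):ℂ) * ec z)).re := by
    rw [Complex.re_tsum hsump_c, ← tsum_mul_left]
    exact tsum_congr (fun n => hSp_eq (n+N))
  have htail_m : ∑' n, Sm (n+N)
      = 2 * (∑' n, Complex.log (1 - (kap (n+N):ℂ) * ec (-z))).re := by
    rw [Complex.re_tsum hsumm_c, ← tsum_mul_left]
    exact tsum_congr (fun n => hSm_eq (n+N))
  have hFt_re : (Ftail z).re = (∑' n, Complex.log (1 - (kap (n+N):ℂ) * ec z)).re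
      + (∑' n, Complex.log (1 - (kap (n+N):ℂ) * ec (-z))).re := by
    simp only [hFt]
    rw [Summable.tsum_add hsump_c hsumm_c, Complex.add_re]
  have hhead : (∑ n ∈ Finset.range N, Sp n) + (∑ n ∈ Finset.range N, Sm n)
      = 2 * (∑ n ∈ Finset.range N, (Complex.log (cp n * (1 - (kap n:ℂ) * ec z))
          + Complex.log (cm n * (1 - (kap n:ℂ) * ec (-z))))).re := by
    rw [Complex.re_sum, Finset.mul_sum, ← Finset.sum_add_distrib]
    apply Finset.sum_congr rfl
    intro n _
    rw [hSp_eq' n, hSm_eq' n, Complex.add_re]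
    ring
  rw [hsplit_p, hsplit_m, htail_p, htail_m, hmain]
  simp only [hFdef]
  rw [Complex.add_re, Complex.add_re, hFt_re]
  linarith [hhead]
lemma main_slice {F : ℂ → ℂ} {U : Set ℂ} (hUo : IsOpen U) (hF : DifferentiableOn ℂ F U)
    {a b : ℝ} (hz : ((a:ℂ) + (b:ℂ) * Complex.I) ∈ U) :
    deriv (deriv (fun t : ℝ => 4*π*(b^2 - b + 1/6) - 4*(F ((t:ℂ) + (b:ℂ)*Complex.I)).re)) a
      + deriv (deriv (fun t : ℝ => 4*π*(t^2 - t + 1/6) - 4*(F ((a:ℂ) + (t:ℂ)*Complex.I)).re)) b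
      = 8*π := by
  have hA : AnalyticOnNhd ℂ F U := hF.analyticOnNhd hUo
  have hA' : AnalyticOnNhd ℂ (deriv F) U := hA.deriv
  -- horizontal line
  have hVh : IsOpen {t : ℝ | ((t:ℂ) + (b:ℂ)*Complex.I) ∈ U} :=
    hUo.preimage (by continuity)
  have hah : a ∈ {t : ℝ | ((t:ℂ) + (b:ℂ)*Complex.I) ∈ U} := hz
  have hder1h : ∀ t ∈ {t : ℝ | ((t:ℂ) + (b:ℂ)*Complex.I) ∈ U},
      HasDerivAt (fun t : ℝ => 4*π*(b^2 - b + 1/6) - 4*(F ((t:ℂ) + (b:ℂ)*Complex.I)).re)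
        (-(4*(deriv F ((t:ℂ) + (b:ℂ)*Complex.I)).re)) t := by
    intro t ht
    have hf : HasDerivAt (fun w : ℂ => w + (b:ℂ)*Complex.I) 1 (t:ℂ) :=
      (hasDerivAt_id _).add_const _
    have hg : HasDerivAt F (deriv F ((t:ℂ) + (b:ℂ)*Complex.I)) ((t:ℂ) + (b:ℂ)*Complex.I) :=
      (hA _ ht).differentiableAt.hasDerivAt
    have h1 : HasDerivAt (fun w : ℂ => F (w + (b:ℂ)*Complex.I))
        (deriv F ((t:ℂ) + (b:ℂ)*Complex.I) * 1) (t:ℂ) := hg.comp (t:ℂ) hf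
    simpa [mul_one] using ((h1.real_of_complex.const_mul (4:ℝ)).const_sub (4*π*(b^2 - b + 1/6)))
  have hd1h : deriv (fun t : ℝ => 4*π*(b^2 - b + 1/6) - 4*(F ((t:ℂ) + (b:ℂ)*Complex.I)).re)
      =ᶠ[nhds a] fun t => -(4*(deriv F ((t:ℂ) + (b:ℂ)*Complex.I)).re) :=
    eventually_of_mem (hVh.mem_nhds hah) (fun t ht => (hder1h t ht).deriv)
  have hd2h : HasDerivAt (fun t : ℝ => -(4*(deriv F ((t:ℂ) + (b:ℂ)*Complex.I)).re))
      (-(4*(deriv (deriv F) ((a:ℂ) + (b:ℂ)*Complex.I)).re)) a := by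
    have hf : HasDerivAt (fun w : ℂ => w + (b:ℂ)*Complex.I) 1 (a:ℂ) :=
      (hasDerivAt_id _).add_const _
    have hg : HasDerivAt (deriv F) (deriv (deriv F) ((a:ℂ) + (b:ℂ)*Complex.I))
        ((a:ℂ) + (b:ℂ)*Complex.I) := (hA' _ hz).differentiableAt.hasDerivAt
    have h1 : HasDerivAt (fun w : ℂ => deriv F (w + (b:ℂ)*Complex.I))
        (deriv (deriv F) ((a:ℂ) + (b:ℂ)*Complex.I) * 1) (a:ℂ) := by have := hg.comp (a:ℂ) hf; exact this
    have h2 := (h1.real_of_complex.const_mul (4:ℝ)).neg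
    simp only [mul_one] at h2
    exact h2
  have Hh : deriv (deriv (fun t : ℝ =>
        4*π*(b^2 - b + 1/6) - 4*(F ((t:ℂ) + (b:ℂ)*Complex.I)).re)) a
      = -(4*(deriv (deriv F) ((a:ℂ) + (b:ℂ)*Complex.I)).re) := by
    rw [hd1h.deriv_eq]; exact hd2h.deriv
  -- vertical line
  have hVv : IsOpen {t : ℝ | ((a:ℂ) + (t:ℂ)*Complex.I) ∈ U} :=
    hUo.preimage (by continuity)
  have hav : b ∈ {t : ℝ | ((a:ℂ) + (t:ℂ)*Complex.I) ∈ U} := hz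
  have hder1v : ∀ t ∈ {t : ℝ | ((a:ℂ) + (t:ℂ)*Complex.I) ∈ U},
      HasDerivAt (fun t : ℝ => 4*π*(t^2 - t + 1/6) - 4*(F ((a:ℂ) + (t:ℂ)*Complex.I)).re)
        (4*π*(2*t - 1) - 4*((deriv F ((a:ℂ) + (t:ℂ)*Complex.I)) * Complex.I).re) t := by
    intro t ht
    have hf : HasDerivAt (fun w : ℂ => (a:ℂ) + w*Complex.I) (1 * Complex.I) (t:ℂ) :=
      ((hasDerivAt_id _).mul_const Complex.I).const_add _
    have hg : HasDerivAt F (deriv F ((a:ℂ) + (t:ℂ)*Complex.I)) ((a:ℂ) + (t:ℂ)*Complex.I) :=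
      (hA _ ht).differentiableAt.hasDerivAt
    have h1 : HasDerivAt (fun w : ℂ => F ((a:ℂ) + w*Complex.I))
        (deriv F ((a:ℂ) + (t:ℂ)*Complex.I) * (1 * Complex.I)) (t:ℂ) := hg.comp (t:ℂ) hf
    have hpoly : HasDerivAt (fun t : ℝ => 4*π*(t^2 - t + 1/6)) (4*π*(2*t - 1)) t := by
      have := (((hasDerivAt_pow 2 t).sub (hasDerivAt_id t)).add_const (1/6)).const_mul (4*π)
      exact this.congr_deriv (by norm_num)
    have h2 := hpoly.sub (h1.real_of_complex.const_mul (4:ℝ))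
    simp only [one_mul] at h2
    exact h2
  have hd1v : deriv (fun t : ℝ => 4*π*(t^2 - t + 1/6) - 4*(F ((a:ℂ) + (t:ℂ)*Complex.I)).re)
      =ᶠ[nhds b] fun t => 4*π*(2*t - 1) - 4*((deriv F ((a:ℂ) + (t:ℂ)*Complex.I)) * Complex.I).re :=
    eventually_of_mem (hVv.mem_nhds hav) (fun t ht => (hder1v t ht).deriv)
  have hd2v : HasDerivAt (fun t : ℝ =>
        4*π*(2*t - 1) - 4*((deriv F ((a:ℂ) + (t:ℂ)*Complex.I)) * Complex.I).re)
      (4*π*2 + 4*(deriv (deriv F) ((a:ℂ) + (b:ℂ)*Complex.I)).re) b := by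
    have h1 : HasDerivAt (fun w : ℂ => deriv F ((a:ℂ) + w*Complex.I) * Complex.I)
        ((deriv (deriv F) ((a:ℂ) + (b:ℂ)*Complex.I) * (1 * Complex.I)) * Complex.I) (b:ℂ) := by
      have hf : HasDerivAt (fun w : ℂ => (a:ℂ) + w*Complex.I) (1 * Complex.I) (b:ℂ) :=
        ((hasDerivAt_id _).mul_const Complex.I).const_add _
      have hg : HasDerivAt (deriv F) (deriv (deriv F) ((a:ℂ) + (b:ℂ)*Complex.I))
          ((a:ℂ) + (b:ℂ)*Complex.I) := (hA' _ hz).differentiableAt.hasDerivAt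
      have h0 : HasDerivAt (fun w : ℂ => deriv F ((a:ℂ) + w*Complex.I))
          (deriv (deriv F) ((a:ℂ) + (b:ℂ)*Complex.I) * (1 * Complex.I)) (b:ℂ) :=
        by have := hg.comp (b:ℂ) hf; exact this
      exact h0.mul_const Complex.I
    have hpoly : HasDerivAt (fun t : ℝ => 4*π*(2*t - 1)) (4*π*2) b := by
      have h := (((hasDerivAt_id b).const_mul (2:ℝ)).sub_const 1).const_mul (4*π)
      simpa using h
    have h2 := hpoly.sub (h1.real_of_complex.const_mul (4:ℝ))
    refine h2.congr_deriv ?_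
    have : deriv (deriv F) ((a:ℂ) + (b:ℂ)*Complex.I) * (1 * Complex.I) * Complex.I
        = -(deriv (deriv F) ((a:ℂ) + (b:ℂ)*Complex.I)) := by
      rw [one_mul, mul_assoc, Complex.I_mul_I, mul_neg_one]
    rw [this]
    simp
  have Hv : deriv (deriv (fun t : ℝ =>
        4*π*(t^2 - t + 1/6) - 4*(F ((a:ℂ) + (t:ℂ)*Complex.I)).re)) b
      = 4*π*2 + 4*(deriv (deriv F) ((a:ℂ) + (b:ℂ)*Complex.I)).re := by
    rw [hd1v.deriv_eq]; exact hd2v.deriv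
  rw [Hh, Hv]
  ring

/-- `λ` is infinitely differentiable away from the lattice `ℤ²` and its Euclidean
Laplacian (the sum of the second partial derivatives) is identically `8π` there. -/
theorem lam_smooth_and_laplacian :
    ContDiffOn ℝ (⊤ : ℕ∞) lam {x : ℝ × ℝ | ¬ ∃ m k : ℤ, x.1 = (m : ℝ) ∧ x.2 = (k : ℝ)} ∧
      ∀ a b : ℝ, (¬ ∃ m k : ℤ, a = (m : ℝ) ∧ b = (k : ℝ)) →
        deriv (deriv (fun t : ℝ => lam (t, b))) a +
          deriv (deriv (fun t : ℝ => lam (a, t))) b = 8 * π := by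
  constructor
  · intro p hpmem
    have hp : ¬∃ m k : ℤ, p.1 = (m:ℝ) ∧ p.2 = (k:ℝ) := hpmem
    obtain ⟨U, F, hUo, hz₀, hFd, hrep⟩ := local_rep hp
    apply ContDiffAt.contDiffWithinAt
    have hlin : ContDiff ℝ (⊤ : ℕ∞) (fun x : ℝ × ℝ => ((x.1:ℂ) + (x.2:ℂ)*Complex.I)) := by
      apply ContDiff.add
      · exact Complex.ofRealCLM.contDiff.comp contDiff_fst
      · exact (Complex.ofRealCLM.contDiff.comp contDiff_snd).mul contDiff_const
    have hFan : ContDiffAt ℝ (⊤ : ℕ∞) F ((p.1:ℂ) + (p.2:ℂ)*Complex.I) :=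
      (((hFd.analyticOnNhd hUo) _ hz₀).contDiffAt).restrict_scalars ℝ
    have hφ : ContDiffAt ℝ (⊤ : ℕ∞) (fun x : ℝ × ℝ =>
        4*π*(x.2^2 - x.2 + 1/6) - 4*(F ((x.1:ℂ) + (x.2:ℂ)*Complex.I)).re) p := by
      apply ContDiffAt.sub
      · exact (contDiff_const.mul (((contDiff_snd.pow 2).sub contDiff_snd).add
          contDiff_const)).contDiffAt
      · exact contDiffAt_const.mul (Complex.reCLM.contDiff.comp_contDiffAt p
          (hFan.comp p hlin.contDiffAt))
    have hVo : IsOpen {x : ℝ × ℝ | ((x.1:ℂ) + (x.2:ℂ)*Complex.I) ∈ U} :=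
      hUo.preimage hlin.continuous
    exact hφ.congr_of_eventuallyEq
      (eventually_of_mem (hVo.mem_nhds hz₀) (fun x hx => hrep x hx))
  · intro a b hp
    obtain ⟨U, F, hUo, hz₀, hFd, hrep⟩ := local_rep hp
    have hch : Continuous (fun t : ℝ => ((t:ℂ) + (b:ℂ)*Complex.I)) := by continuity
    have hcv : Continuous (fun t : ℝ => ((a:ℂ) + (t:ℂ)*Complex.I)) := by continuity
    have hVh : IsOpen {t : ℝ | ((t:ℂ) + (b:ℂ)*Complex.I) ∈ U} := hUo.preimage hch
    have hVv : IsOpen {t : ℝ | ((a:ℂ) + (t:ℂ)*Complex.I) ∈ U} := hUo.preimage hcv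
    have hevh : (fun t : ℝ => lam (t, b)) =ᶠ[nhds a]
        (fun t : ℝ => 4*π*(b^2 - b + 1/6) - 4*(F ((t:ℂ) + (b:ℂ)*Complex.I)).re) :=
      eventually_of_mem (hVh.mem_nhds hz₀) (fun t ht => hrep (t, b) ht)
    have hevv : (fun t : ℝ => lam (a, t)) =ᶠ[nhds b]
        (fun t : ℝ => 4*π*(t^2 - t + 1/6) - 4*(F ((a:ℂ) + (t:ℂ)*Complex.I)).re) :=
      eventually_of_mem (hVv.mem_nhds hz₀) (fun t ht => hrep (a, t) ht)
    rw [(hevh.deriv).deriv_eq, (hevv.deriv).deriv_eq]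
    exact main_slice hUo hFd hz₀
end

section
/- As x → 0 with x ∈ ℝ² ∖ ℤ², the function λ(x) + 4·log|x| converges, and lim_{x→0} (λ(x) + 4·log|x|) = −4·log(2π) + 2π/3 − 8·Σ_{n=1}^∞ log(1 − e^{−2πn}); that is, the Green function of the flat unit torus has the expansion G(P,Q) = −4 log r + A_P + O(r²) near its singularity with regular value A_P = −4 log(2π) + 2π/3 − 8Σ_{n=1}^∞ log(1 − e^{−2πn}). -/
open Real

/-!
Write `z = x₁ + x₂ i` and `q = e^{-2π}`. Each logarithm in `λ` is `2 log |1 - w|` for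
`w = e^{2πiz}`, `qⁿ e^{2πiz}` or `qⁿ e^{-2πiz}`, so `λ` is a polynomial in `x₂` minus `4 log` of
the modulus of the product `(1 - e^{2πiz}) ∏ₙ (1 - qⁿ e^{2πiz}) (1 - qⁿ e^{-2πiz})`. Near `z = 0`
the factors of the infinite products satisfy `|log |1 - w|| ≤ -log (1 - r)` with summable
`r = O(qⁿ)`, so by dominated convergence the products contribute their value at `0`. The only
singular factor has `(1 - e^{2πiz}) / z → -2πi`, which turns `-4 log |1 - e^{2πiz}|` into
`-4 log |z| - 4 log (2π) + o(1)`.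
-/

open Filter Topology Complex

lemma abs_log_norm_one_sub_le {w : ℂ} {r : ℝ} (hw : ‖w‖ ≤ r) (hr : r < 1) :
    |Real.log ‖1 - w‖| ≤ -Real.log (1 - r) := by
  have hr0 : 0 ≤ r := (norm_nonneg w).trans hw
  have hlow : 1 - r ≤ ‖1 - w‖ := by
    have := norm_sub_norm_le (1 : ℂ) w
    rw [norm_one] at this
    linarith
  have hup : ‖1 - w‖ ≤ (1 - r)⁻¹ :=
    calc ‖1 - w‖ ≤ 1 + r := (norm_sub_le _ _).trans (by rw [norm_one]; linarith)
      _ ≤ (1 - r)⁻¹ := by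
        rw [le_inv_comm₀ (by linarith) (by linarith), ← one_div, le_div_iff₀ (by linarith)]
        nlinarith
  rw [abs_le]
  constructor
  · linarith [Real.log_le_log (by linarith) hlow]
  · rw [← Real.log_inv]
    exact Real.log_le_log (by linarith) hup

lemma summable_neg_log_one_sub {ι : Type*} {r : ι → ℝ} (hr : Summable r) :
    Summable fun i => -Real.log (1 - r i) := by
  simpa only [sub_eq_add_neg] using (Real.summable_log_one_add_of_summable hr.neg).neg

lemma continuousAt_tsum_log_norm_one_sub {X : Type*} [TopologicalSpace X] {w : ℕ → X → ℂ}
    {r : ℕ → ℝ} {x₀ : X} (hr : Summable r) (hr1 : ∀ n, r n < 1)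
    (hw : ∀ n, ContinuousAt (w n) x₀) (hwr : ∀ᶠ x in 𝓝 x₀, ∀ n, ‖w n x‖ ≤ r n) :
    ContinuousAt (fun x => ∑' n, Real.log ‖1 - w n x‖) x₀ := by
  refine tendsto_tsum_of_dominated_convergence (summable_neg_log_one_sub hr) (fun n => ?_) ?_
  · have hne : 1 - w n x₀ ≠ 0 := by
      intro h
      have := hwr.self_of_nhds n
      rw [← sub_eq_zero.mp h, norm_one] at this
      linarith [hr1 n]
    exact (continuousAt_const.sub (hw n)).norm.log (norm_ne_zero_iff.mpr hne)
  · filter_upwards [hwr] with x hx n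
    exact abs_log_norm_one_sub_le (hx n) (hr1 n)

lemma tendsto_tsum_log_norm_one_sub_cexp (c : ℂ) :
    Tendsto (fun z : ℂ => ∑' n : ℕ, Real.log ‖1 - cexp (-2 * π * (n + 1) + c * z)‖) (𝓝 0)
      (𝓝 (∑' n : ℕ, Real.log (1 - Real.exp (-2 * π * (n + 1))))) := by
  have hr : Summable fun n : ℕ => Real.exp (1 - 2 * π * (n + 1)) := by
    have hgeom (n : ℕ) :
        Real.exp (1 - 2 * π * (n + 1)) = Real.exp (1 - 2 * π) * Real.exp (-2 * π) ^ n := by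
      rw [← Real.exp_nat_mul, ← Real.exp_add]
      ring_nf
    simp only [hgeom]
    exact (summable_geometric_of_lt_one (Real.exp_pos _).le
      (Real.exp_lt_one_iff.mpr (by linarith [pi_pos]))).mul_left _
  have hr1 (n : ℕ) : Real.exp (1 - 2 * π * (n + 1)) < 1 := by
    rw [Real.exp_lt_one_iff]
    nlinarith [pi_gt_three, (n.cast_nonneg : (0 : ℝ) ≤ n)]
  have hbound : ∀ᶠ z in 𝓝 (0 : ℂ), ∀ n : ℕ,
      ‖cexp (-2 * π * (n + 1) + c * z)‖ ≤ Real.exp (1 - 2 * π * (n + 1)) := by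
    have hre : ∀ᶠ z in 𝓝 (0 : ℂ), (c * z).re < 1 :=
      (show Continuous fun z : ℂ => (c * z).re by fun_prop).continuousAt.eventually_lt
        continuousAt_const (by simp)
    filter_upwards [hre] with z hz n
    have hre_add : (-2 * π * (n + 1) + c * z : ℂ).re = -2 * π * (n + 1) + (c * z).re := by
      rw [add_re]
      norm_cast
    rw [norm_exp, hre_add]
    gcongr
    linarith
  have hval (n : ℕ) : Real.log ‖1 - cexp (-2 * π * (n + 1) + c * 0)‖
      = Real.log (1 - Real.exp (-2 * π * (n + 1))) := by
    have hlt : Real.exp (-2 * π * (n + 1)) < 1 := by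
      rw [Real.exp_lt_one_iff]
      nlinarith [pi_pos, (n.cast_nonneg : (0 : ℝ) ≤ n)]
    rw [← Real.norm_of_nonneg (sub_nonneg.mpr hlt.le), ← norm_real, mul_zero, add_zero]
    norm_cast
  simpa only [hval] using
    (continuousAt_tsum_log_norm_one_sub hr hr1 (fun n => by fun_prop) hbound).tendsto

lemma HasDerivAt.tendsto_log_norm_sub_sub_log_norm_sub {𝕜 : Type*} [NontriviallyNormedField 𝕜]
    {f : 𝕜 → 𝕜} {f' a : 𝕜} (hf : HasDerivAt f f' a) (hf' : f' ≠ 0) :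
    Tendsto (fun z => Real.log ‖f z - f a‖ - Real.log ‖z - a‖) (𝓝[≠] a) (𝓝 (Real.log ‖f'‖)) := by
  have hslope := hasDerivAt_iff_tendsto_slope.mp hf
  refine (hslope.norm.log (norm_ne_zero_iff.mpr hf')).congr' ?_
  filter_upwards [hslope.eventually_ne hf', self_mem_nhdsWithin] with z hz hza
  rw [slope_def_field] at hz ⊢
  have hfz : f z - f a ≠ 0 := fun h => hz (by rw [h, zero_div])
  rw [norm_div, Real.log_div (norm_ne_zero_iff.mpr hfz) (norm_ne_zero_iff.mpr (sub_ne_zero.mpr hza))]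

lemma tendsto_log_norm_one_sub_cexp_sub_log_norm :
    Tendsto (fun z : ℂ => Real.log ‖1 - cexp (2 * π * I * z)‖ - Real.log ‖z‖) (𝓝[≠] 0)
      (𝓝 (Real.log (2 * π))) := by
  have hf : HasDerivAt (fun z : ℂ => 1 - cexp (2 * π * I * z)) (-(2 * π * I)) 0 := by
    simpa using (((hasDerivAt_id (0 : ℂ)).const_mul (2 * π * I)).cexp).const_sub 1
  have hnorm : ‖-(2 * π * I : ℂ)‖ = 2 * π := by
    simp [pi_pos.le]
  simpa [hnorm] using hf.tendsto_log_norm_sub_sub_log_norm_sub (by simp [pi_ne_zero])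

lemma norm_one_sub_cexp_sq (z : ℂ) :
    ‖1 - cexp z‖ ^ 2 = 1 + Real.exp (2 * z.re) - 2 * Real.exp z.re * Real.cos z.im := by
  rw [Complex.sq_norm, Complex.normSq_apply]
  simp only [sub_re, sub_im, one_re, one_im, exp_re, exp_im]
  rw [mul_comm 2 z.re, Real.exp_mul, Real.rpow_two]
  nlinarith [Real.sin_sq_add_cos_sq z.im]

lemma log_one_add_exp_two_mul_sub {z : ℂ} {a θ : ℝ} (ha : z.re = a) (hθ : z.im = θ) :
    Real.log (1 + Real.exp (2 * a) - 2 * Real.exp a * Real.cos θ) = 2 * Real.log ‖1 - cexp z‖ := by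
  rw [← ha, ← hθ, ← norm_one_sub_cexp_sq, Real.log_pow, Nat.cast_ofNat]

lemma lam_eq (x : ℝ × ℝ) :
    lam x = 4 * π * (x.2 ^ 2 - x.2 + 1 / 6)
      - 4 * Real.log ‖1 - cexp (2 * π * I * (x.1 + x.2 * I))‖
      - 4 * ∑' n : ℕ, Real.log ‖1 - cexp (-2 * π * (n + 1) + 2 * π * I * (x.1 + x.2 * I))‖
      - 4 * ∑' n : ℕ, Real.log ‖1 - cexp (-2 * π * (n + 1) + -(2 * π * I) * (x.1 + x.2 * I))‖ := by
  have h₀ : Real.log (1 + Real.exp (-4 * π * x.2) -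
        2 * Real.exp (-2 * π * x.2) * Real.cos (2 * π * x.1))
      = 2 * Real.log ‖1 - cexp (2 * π * I * (x.1 + x.2 * I))‖ := by
    rw [show -4 * π * x.2 = 2 * (-2 * π * x.2) by ring]
    exact log_one_add_exp_two_mul_sub (by simp) (by simp)
  have h₁ (n : ℕ) : Real.log (1 + Real.exp (-4 * π * (n + 1) - 4 * π * x.2) -
        2 * Real.exp (-2 * π * (n + 1) - 2 * π * x.2) * Real.cos (2 * π * x.1))
      = 2 * Real.log ‖1 - cexp (-2 * π * (n + 1) + 2 * π * I * (x.1 + x.2 * I))‖ := by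
    rw [show -4 * π * (n + 1) - 4 * π * x.2 = 2 * (-2 * π * (n + 1) - 2 * π * x.2) by ring]
    exact log_one_add_exp_two_mul_sub (by simp [sub_eq_add_neg]) (by simp)
  have h₂ (n : ℕ) : Real.log (1 + Real.exp (-4 * π * (n + 1) + 4 * π * x.2) -
        2 * Real.exp (-2 * π * (n + 1) + 2 * π * x.2) * Real.cos (2 * π * x.1))
      = 2 * Real.log ‖1 - cexp (-2 * π * (n + 1) + -(2 * π * I) * (x.1 + x.2 * I))‖ := by
    rw [show -4 * π * (n + 1) + 4 * π * x.2 = 2 * (-2 * π * (n + 1) + 2 * π * x.2) by ring,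
      ← Real.cos_neg]
    exact log_one_add_exp_two_mul_sub (by simp) (by simp)
  rw [lam, h₀, tsum_congr h₁, tsum_congr h₂, tsum_mul_left, tsum_mul_left]
  ring

/-- As `x → 0` within `ℝ² \ ℤ²`, `λ(x) + 4 log |x|` converges to
`-4 log(2π) + 2π/3 - 8 Σ_{n≥1} log(1 - e^{-2πn})`, the regular value `A_P` of the Green
function of the flat unit torus at its singularity. -/
theorem lam_expansion_at_singularity :
    Filter.Tendsto (fun x : ℝ × ℝ => lam x + 4 * Real.log (Real.sqrt (x.1 ^ 2 + x.2 ^ 2)))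
      (nhdsWithin (0 : ℝ × ℝ) {x : ℝ × ℝ | ¬ ∃ m k : ℤ, x.1 = (m : ℝ) ∧ x.2 = (k : ℝ)})
      (nhds (-4 * Real.log (2 * π) + 2 * π / 3 -
        8 * ∑' n : ℕ, Real.log (1 - Real.exp (-2 * π * (n + 1))))) := by
  set S := {x : ℝ × ℝ | ¬ ∃ m k : ℤ, x.1 = (m : ℝ) ∧ x.2 = (k : ℝ)}
  have hζ : Tendsto (fun x : ℝ × ℝ => (x.1 + x.2 * I : ℂ)) (𝓝[S] 0) (𝓝[≠] 0) := by
    refine tendsto_nhdsWithin_of_tendsto_nhds_of_eventually_within _ ?_ ?_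
    · have hc : Continuous fun x : ℝ × ℝ => (x.1 + x.2 * I : ℂ) := by fun_prop
      simpa using (hc.tendsto 0).mono_left nhdsWithin_le_nhds
    · filter_upwards [self_mem_nhdsWithin] with x hx h
      exact hx ⟨0, 0, by simpa using congrArg re h, by simpa using congrArg im h⟩
  have hpoly : Tendsto (fun x : ℝ × ℝ => 4 * π * (x.2 ^ 2 - x.2 + 1 / 6)) (𝓝[S] 0)
      (𝓝 (2 * π / 3)) := by
    have hc : Continuous fun x : ℝ × ℝ => 4 * π * (x.2 ^ 2 - x.2 + 1 / 6) := by fun_prop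
    convert (hc.tendsto 0).mono_left nhdsWithin_le_nhds using 2
    rw [Prod.snd_zero]
    ring
  have hsum (c : ℂ) :=
    (tendsto_tsum_log_norm_one_sub_cexp c).comp (hζ.mono_right nhdsWithin_le_nhds)
  convert ((hpoly.sub ((tendsto_log_norm_one_sub_cexp_sub_log_norm.comp hζ).const_mul 4)).sub
    ((hsum (2 * π * I)).const_mul 4)).sub ((hsum (-(2 * π * I))).const_mul 4) using 1
  · funext x
    rw [lam_eq, ← norm_add_mul_I]
    simp only [Function.comp_apply]
    ring
  · congr 1
    ring
end

section
/- The real number A_P := −4·log(2π) + 2π/3 − 8·Σ_{n=1}^∞ log(1 − e^{−2πn}) satisfies A_P < −2 − 2·log π. -/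
/-!
Since `log (1 - x) ≥ -2x` for `0 ≤ x ≤ 1/2`, the series is at least `-2q/(1 - q)` with
`q = e^{-2π} ≤ e^{-6} ≤ 1/64`, so it contributes at most `16/63` to `A_P`. The claim then
follows from `log 2 > 0.69`, `log π > 1` and `π < 3.15`.
-/

open Real

namespace Real

lemma neg_two_mul_le_log_one_sub {x : ℝ} (hx₀ : 0 ≤ x) (hx : x ≤ 1 / 2) :
    -(2 * x) ≤ log (1 - x) := by
  have hpos : 0 < 1 - x := by linarith
  calc -(2 * x) ≤ 1 - (1 - x)⁻¹ := by
        rw [le_sub_iff_add_le, ← le_sub_iff_add_le', inv_le_iff_one_le_mul₀ hpos]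
        nlinarith
    _ ≤ log (1 - x) := one_sub_inv_le_log_of_pos hpos

lemma summable_log_one_sub_pow_succ {q : ℝ} (hq₀ : 0 ≤ q) (hq : q < 1) :
    Summable fun n : ℕ ↦ log (1 - q ^ (n + 1)) := by
  simpa only [sub_eq_add_neg] using summable_log_one_add_of_summable
    ((summable_nat_add_iff 1).mpr (summable_geometric_of_lt_one hq₀ hq)).neg

lemma tsum_pow_succ_of_lt_one {q : ℝ} (hq₀ : 0 ≤ q) (hq : q < 1) :
    ∑' n : ℕ, q ^ (n + 1) = q / (1 - q) := by
  simp only [pow_succ', tsum_mul_left, tsum_geometric_of_lt_one hq₀ hq, div_eq_mul_inv]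

lemma neg_two_mul_div_le_tsum_log_one_sub_pow_succ {q : ℝ} (hq₀ : 0 ≤ q) (hq : q ≤ 1 / 2) :
    -(2 * (q / (1 - q))) ≤ ∑' n : ℕ, log (1 - q ^ (n + 1)) := by
  have hq₁ : q < 1 := by linarith
  have hgeom : Summable fun n : ℕ ↦ q ^ (n + 1) :=
    (summable_nat_add_iff 1).mpr (summable_geometric_of_lt_one hq₀ hq₁)
  rw [← tsum_pow_succ_of_lt_one hq₀ hq₁, ← tsum_mul_left, ← tsum_neg]
  refine (hgeom.mul_left 2).neg.tsum_le_tsum (fun n ↦ ?_) (summable_log_one_sub_pow_succ hq₀ hq₁)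
  exact neg_two_mul_le_log_one_sub (by positivity)
    ((pow_le_of_le_one hq₀ hq₁.le n.succ_ne_zero).trans hq)

lemma exp_neg_two_mul_pi_le : exp (-(2 * π)) ≤ 1 / 64 := by
  have h64 : (64 : ℝ) ≤ exp 6 := by
    calc (64 : ℝ) = 2 ^ 6 := by norm_num
      _ ≤ exp 1 ^ 6 := by gcongr; linarith [add_one_le_exp (1 : ℝ)]
      _ = exp 6 := by rw [← exp_nat_mul]; norm_num
  calc exp (-(2 * π)) ≤ exp (-6) := exp_le_exp.mpr (by linarith [pi_gt_three])
    _ = (exp 6)⁻¹ := exp_neg 6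
    _ ≤ 1 / 64 := by rw [one_div]; gcongr

end Real

/-- The regular value `A_P = -4 log(2π) + 2π/3 - 8 Σ_{n≥1} log(1 - e^{-2πn})` of the Green
function of the flat unit torus satisfies `A_P < -2 - 2 log π`. -/
theorem regular_value_bound :
    -4 * Real.log (2 * π) + 2 * π / 3 -
        8 * ∑' n : ℕ, Real.log (1 - Real.exp (-2 * π * (n + 1))) <
      -2 - 2 * Real.log π := by
  set q := exp (-(2 * π))
  have hq : q ≤ 1 / 64 := exp_neg_two_mul_pi_le
  have hterm (n : ℕ) : exp (-2 * π * (n + 1)) = q ^ (n + 1) := by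
    rw [← exp_nat_mul]; push_cast; ring_nf
  have hsum : -(2 * (q / (1 - q))) ≤ ∑' n : ℕ, log (1 - exp (-2 * π * (n + 1))) := by
    simpa only [hterm] using neg_two_mul_div_le_tsum_log_one_sub_pow_succ (exp_pos _).le
      (hq.trans (by norm_num))
  have hratio : q / (1 - q) ≤ 1 / 63 := by
    rw [div_le_iff₀ (by linarith)]; linarith
  have hlog_pi : 1 < log π := by
    rw [lt_log_iff_exp_lt pi_pos]; linarith [exp_one_lt_d9, pi_gt_three]
  rw [log_mul two_ne_zero pi_ne_zero]
  linarith [log_two_gt_d9, pi_lt_d2]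
end

section
/- The inequality ( −4·log(2π) + 2π/3 − 8·Σ_{n=1}^∞ log(1 − e^{−2πn}) ) + ( 2π/3 − 4·log 2 − 8·Σ_{n=1}^∞ log(1 + e^{−2πn}) ) < −2 − 2·log π − 2·log 2 holds. -/
open Real

private lemma neg_log_one_sub_le {x : ℝ} (hx0 : 0 ≤ x) (hx : x ≤ 1/2) :
    -Real.log (1 - x) ≤ 2 * x := by
  have h1 : (0:ℝ) < 1 - x := by linarith
  have h3 : 1 + 2*x ≤ Real.exp (2*x) := by
    have := Real.add_one_le_exp (2*x); linarith
  have hpos : (0:ℝ) < 1 + 2*x := by linarith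
  have h4 : (Real.exp (2*x))⁻¹ ≤ (1+2*x)⁻¹ := by
    exact inv_anti₀ hpos h3
  have h5 : (1+2*x)⁻¹ ≤ 1 - x := by
    rw [inv_le_iff_one_le_mul₀ hpos]
    nlinarith
  have h2 : Real.exp (-(2*x)) ≤ 1 - x := by
    rw [Real.exp_neg]; linarith
  have := Real.log_le_log (Real.exp_pos _) h2
  rw [Real.log_exp] at this
  linarith

/-- The regular value `Ã_P = A_P + G(P, σ₂(P))` of the symmetrized Green function of the
flat unit torus satisfies `Ã_P < -2 - 2 log π - 2 log 2`, which is the hypothesis of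
Theorem 2 for the flat unit torus with `ℓ = 2` and constant `h`. -/
theorem symmetrized_regular_value_bound :
    (-4 * Real.log (2 * π) + 2 * π / 3 -
        8 * ∑' n : ℕ, Real.log (1 - Real.exp (-2 * π * (n + 1)))) +
      (2 * π / 3 - 4 * Real.log 2 -
        8 * ∑' n : ℕ, Real.log (1 + Real.exp (-2 * π * (n + 1)))) <
      -2 - 2 * Real.log π - 2 * Real.log 2 := by
  set q : ℝ := Real.exp (-2 * π) with hq
  have hπ1 : 3.141592 < π := Real.pi_gt_d6
  have hπ2 : π < 3.141593 := Real.pi_lt_d6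
  have hq0 : 0 < q := Real.exp_pos _
  -- q ≤ 1/400
  have hexp6 : (400:ℝ) ≤ Real.exp 6 := by
    have h6 : Real.exp 6 = Real.exp 1 ^ 6 := by
      rw [← Real.exp_nat_mul]; norm_num
    rw [h6]
    calc (400:ℝ) ≤ 2.7182818283 ^ 6 := by norm_num
      _ ≤ Real.exp 1 ^ 6 := pow_le_pow_left₀ (by norm_num) (le_of_lt Real.exp_one_gt_d9) 6
  have hq400 : q ≤ 1/400 := by
    have h1 : q ≤ Real.exp (-6) := by
      apply Real.exp_le_exp.2; nlinarith
    have h2 : Real.exp (-6) = (Real.exp 6)⁻¹ := Real.exp_neg 6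
    have h3 : (Real.exp 6)⁻¹ ≤ 1/400 := by
      rw [inv_le_comm₀ (Real.exp_pos 6) (by norm_num)]
      linarith [hexp6]
    linarith
  have hq1 : q < 1 := by linarith
  -- rewrite exponentials as powers of q
  have hpow : ∀ n : ℕ, Real.exp (-2 * π * (n + 1)) = q ^ (n+1) := by
    intro n
    rw [hq, ← Real.exp_nat_mul]
    congr 1
    push_cast; ring
  have hqn : ∀ n : ℕ, 0 < q ^ (n+1) := fun n => pow_pos hq0 _
  have hqnle : ∀ n : ℕ, q ^ (n+1) ≤ 1/400 := by
    intro n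
    calc q ^ (n+1) ≤ q ^ 1 := pow_le_pow_of_le_one (le_of_lt hq0) (le_of_lt hq1) (by omega)
    _ = q := pow_one q
    _ ≤ 1/400 := hq400
  -- second sum is nonneg
  have hS2 : 0 ≤ ∑' n : ℕ, Real.log (1 + Real.exp (-2 * π * (n + 1))) := by
    apply tsum_nonneg
    intro n
    apply Real.log_nonneg
    have := (Real.exp_pos (-2 * π * (n + 1))).le
    linarith
  -- first sum lower bound
  have hgsum : Summable (fun n : ℕ => (2*q) * q ^ n) :=
    (summable_geometric_of_lt_one (le_of_lt hq0) hq1).mul_left (2*q)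
  have hbound : ∀ n : ℕ, -Real.log (1 - q ^ (n+1)) ≤ (2*q) * q ^ n := by
    intro n
    have h := neg_log_one_sub_le (le_of_lt (hqn n)) (by linarith [hqnle n])
    calc -Real.log (1 - q ^ (n+1)) ≤ 2 * q ^ (n+1) := h
      _ = (2*q) * q ^ n := by rw [pow_succ]; ring
  have hnonneg : ∀ n : ℕ, 0 ≤ -Real.log (1 - q ^ (n+1)) := by
    intro n
    have h1 : 1 - q ^ (n+1) ≤ 1 := by linarith [hqn n]
    have := Real.log_nonpos (by linarith [hqnle n]) h1
    linarith
  have hsumneg : Summable (fun n : ℕ => -Real.log (1 - q ^ (n+1))) :=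
    Summable.of_nonneg_of_le hnonneg hbound hgsum
  have hgeo : ∑' n : ℕ, (2*q) * q ^ n = (2*q) * (1-q)⁻¹ := by
    rw [tsum_mul_left, tsum_geometric_of_lt_one (le_of_lt hq0) hq1]
  have htle : ∑' n : ℕ, -Real.log (1 - q ^ (n+1)) ≤ (2*q) * (1-q)⁻¹ := by
    rw [← hgeo]
    exact Summable.tsum_le_tsum hbound hsumneg hgsum
  have hrhs : (2*q) * (1-q)⁻¹ ≤ 1/199 := by
    have h1 : (0:ℝ) < 1 - q := by linarith
    rw [mul_inv_le_iff₀ h1]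
    nlinarith
  have hS1 : -(1/199 : ℝ) ≤ ∑' n : ℕ, Real.log (1 - Real.exp (-2 * π * (n + 1))) := by
    have heq : (fun n : ℕ => Real.log (1 - Real.exp (-2 * π * (n + 1)))) =
        fun n : ℕ => -(-Real.log (1 - q ^ (n+1))) := by
      funext n; rw [hpow n]; ring
    rw [heq, tsum_neg]
    have := le_trans htle hrhs
    linarith
  -- log bounds
  have hlog2 : (0.6931471803 : ℝ) < Real.log 2 := Real.log_two_gt_d9
  have hlogpi : 2 - Real.exp 1 / π ≤ Real.log π := by
    have hπpos : (0:ℝ) < π := by linarith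
    have hpos : 0 < Real.exp 1 / π := by positivity
    have h := Real.log_le_sub_one_of_pos hpos
    rw [Real.log_div (Real.exp_ne_zero 1) (ne_of_gt hπpos), Real.log_exp] at h
    linarith
  have hediv : Real.exp 1 / π ≤ 2.7182818286 / 3.141592 := by
    have h1 : Real.exp 1 < 2.7182818286 := Real.exp_one_lt_d9
    apply div_le_div₀ (by norm_num) (le_of_lt h1) (by linarith) (le_of_lt hπ1)
  have hlogpi' : (1.13 : ℝ) ≤ Real.log π := by
    have : (2.7182818286 : ℝ) / 3.141592 ≤ 0.87 := by norm_num
    linarith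
  have hlog2pi : Real.log (2 * π) = Real.log 2 + Real.log π := by
    rw [Real.log_mul (by norm_num) (by positivity)]
  rw [hlog2pi]
  linarith
end
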